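/- arXiv:2505.23531 — 6 statements merged into one kernel-verified Lean document; each statement's English description precedes it below -/
import Mathlib

section
/- For a nonempty finite Young diagram λ ⊂ ℤ≥0², let A₁ = {k₁ : ∃ k₂, (k₁,k₂) ∈ λ} and A₂ = {k₂ : ∃ k₁, (k₁,k₂) ∈ λ}. Then the coefficient of t₁⁰t₂⁰ in t₁⁻¹t₂⁻¹ · Q_λ · Q̄_λ equals |λ| − |A₁| − |A₂| + 1. -/
noncomputable def Qlam (l : Finset (ℕ × ℕ)) : AddMonoidAlgebra ℤ (ℤ × ℤ) :=
  ∑ p ∈ l, AddMonoidAlgebra.single ((p.1 : ℤ), (p.2 : ℤ)) 1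

noncomputable def Qbar (l : Finset (ℕ × ℕ)) : AddMonoidAlgebra ℤ (ℤ × ℤ) :=
  ∑ p ∈ l, AddMonoidAlgebra.single (-(p.1 : ℤ), -(p.2 : ℤ)) 1

def YoungDiag (l : Finset (ℕ × ℕ)) : Prop :=
  ∀ k ∈ l, ∀ m : ℕ × ℕ, m.1 ≤ k.1 → m.2 ≤ k.2 → m ∈ l

-- downward closed nonempty finset of ℕ is a range
lemma range_of_dc (s : Finset ℕ) (hs : s.Nonempty) (hd : ∀ k ∈ s, ∀ j ≤ k, j ∈ s) :
    s = Finset.range s.card := by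
  have hM : s.max' hs ∈ s := s.max'_mem hs
  have h1 : s = Finset.range (s.max' hs + 1) := by
    apply Finset.ext
    intro x
    simp only [Finset.mem_range, Nat.lt_succ_iff]
    exact ⟨fun hx => s.le_max' x hx, fun hx => hd _ hM x hx⟩
  rw [h1, Finset.card_range]

lemma card_filter_succ (l : Finset (ℕ × ℕ)) (h : YoungDiag l) (hne : l.Nonempty) :
    ((l.filter (fun p => (p.1+1, p.2+1) ∈ l)).card : ℤ) =
      (l.card : ℤ) - ((l.image Prod.fst).card : ℤ) - ((l.image Prod.snd).card : ℤ) + 1 := by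
  classical
  set a := (l.image Prod.fst).card with ha
  set b := (l.image Prod.snd).card with hb
  have hA1 : l.image Prod.fst = Finset.range a := by
    apply range_of_dc _ (hne.image _)
    intro k hk j hj
    simp only [Finset.mem_image] at hk ⊢
    obtain ⟨p, hp, hpk⟩ := hk
    exact ⟨(j, p.2), h p hp (j, p.2) (by simp [hpk.symm ▸ hj, hj, hpk]) le_rfl, rfl⟩
  have hA2 : l.image Prod.snd = Finset.range b := by
    apply range_of_dc _ (hne.image _)
    intro k hk j hj
    simp only [Finset.mem_image] at hk ⊢
    obtain ⟨p, hp, hpk⟩ := hk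
    exact ⟨(p.1, j), h p hp (p.1, j) le_rfl (by simp [hj, hpk]), rfl⟩
  -- membership facts
  have hmem1 : ∀ p ∈ l, p.1 < a := by
    intro p hp
    have : p.1 ∈ l.image Prod.fst := Finset.mem_image_of_mem _ hp
    rwa [hA1, Finset.mem_range] at this
  have hmem2 : ∀ p ∈ l, p.2 < b := by
    intro p hp
    have : p.2 ∈ l.image Prod.snd := Finset.mem_image_of_mem _ hp
    rwa [hA2, Finset.mem_range] at this
  have hcol : ∀ k2 < b, (0, k2) ∈ l := by
    intro k2 hk2
    have : k2 ∈ l.image Prod.snd := by rw [hA2, Finset.mem_range]; exact hk2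
    simp only [Finset.mem_image] at this
    obtain ⟨p, hp, hpk⟩ := this
    exact h p hp (0, k2) (Nat.zero_le _) (le_of_eq hpk.symm)
  have hrow : ∀ k1 < a, (k1, 0) ∈ l := by
    intro k1 hk1
    have : k1 ∈ l.image Prod.fst := by rw [hA1, Finset.mem_range]; exact hk1
    simp only [Finset.mem_image] at this
    obtain ⟨p, hp, hpk⟩ := this
    exact h p hp (k1, 0) (le_of_eq hpk.symm) (Nat.zero_le _)
  have ha1 : 1 ≤ a := by
    obtain ⟨p, hp⟩ := hne; exact Nat.one_le_iff_ne_zero.mpr (Nat.pos_iff_ne_zero.mp (Nat.lt_of_le_of_lt (Nat.zero_le _) (hmem1 p hp)))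
  have hb1 : 1 ≤ b := by
    obtain ⟨p, hp⟩ := hne; exact Nat.lt_of_le_of_lt (Nat.zero_le _) (hmem2 p hp)
  -- the rim
  set S := l.filter (fun p => (p.1+1, p.2+1) ∉ l) with hS
  have hScard : S.card = a + b - 1 := by
    rw [← Finset.card_range (a + b - 1)]
    apply Finset.card_bij (fun p _ => p.1 + (b - 1 - p.2))
    · intro p hp
      simp only [hS, Finset.mem_filter] at hp
      have h1 := hmem1 p hp.1
      have h2 := hmem2 p hp.1
      rw [Finset.mem_range]
      omega
    · intro p hp q hq hpq
      simp only [hS, Finset.mem_filter] at hp hq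
      have hp2 := hmem2 p hp.1
      have hq2 := hmem2 q hq.1
      have key : p.1 + q.2 = q.1 + p.2 := by omega
      rcases lt_trichotomy p.1 q.1 with hlt | heq | hgt
      · exact absurd (h q hq.1 (p.1+1, p.2+1) (by omega) (by simp; omega)) hp.2
      · have : p.2 = q.2 := by omega
        exact Prod.ext heq this
      · exact absurd (h p hp.1 (q.1+1, q.2+1) (by omega) (by simp; omega)) hq.2
    · intro d hd
      rw [Finset.mem_range] at hd
      -- diagonal
      set D := l.filter (fun p => p.1 + (b-1) = d + p.2) with hD
      have hDne : D.Nonempty := by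
        by_cases hcase : d ≤ b - 1
        · refine ⟨(0, b - 1 - d), ?_⟩
          simp only [hD, Finset.mem_filter]
          exact ⟨hcol _ (by omega), by simp; omega⟩
        · refine ⟨(d - (b-1), 0), ?_⟩
          simp only [hD, Finset.mem_filter]
          exact ⟨hrow _ (by omega), by omega⟩
      obtain ⟨p, hpD, hpmax⟩ := D.exists_max_image (fun p => p.1) hDne
      simp only [hD, Finset.mem_filter] at hpD
      refine ⟨p, ?_, ?_⟩
      · simp only [hS, Finset.mem_filter]
        refine ⟨hpD.1, fun hc => ?_⟩
        have : (p.1+1, p.2+1) ∈ D := by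
          simp only [hD, Finset.mem_filter]
          refine ⟨hc, ?_⟩
          omega
        have := hpmax _ this
        simp only at this
        omega
      · have := hmem2 p hpD.1
        omega
  have hsplit : (l.filter (fun p => (p.1+1, p.2+1) ∈ l)).card + S.card = l.card := by
    rw [hS]
    exact Finset.card_filter_add_card_filter_not (fun p : ℕ × ℕ => (p.1+1, p.2+1) ∈ l)
  omega

lemma coeff_eq_card (l : Finset (ℕ × ℕ)) :
    (AddMonoidAlgebra.single ((-1 : ℤ), (-1 : ℤ)) (1 : ℤ) * Qlam l * Qbar l).coeff (0, 0) =
      ((l.filter (fun p => (p.1+1, p.2+1) ∈ l)).card : ℤ) := by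
  classical
  rw [Qlam, Qbar]
  simp only [Finset.mul_sum, Finset.sum_mul, AddMonoidAlgebra.single_mul_single, one_mul,
    AddMonoidAlgebra.coeff_sum]
  rw [Finsupp.finset_sum_apply]
  refine (Finset.sum_congr rfl fun q _ => Finsupp.finset_sum_apply l _ (0,0)).trans ?_
  rw [Finset.card_filter]
  push_cast
  refine Finset.sum_congr rfl fun p _ => ?_
  have : ∀ q ∈ l, (AddMonoidAlgebra.single
      (((-1 : ℤ), (-1 : ℤ)) + ((q.1 : ℤ), (q.2 : ℤ)) + (-(p.1 : ℤ), -(p.2 : ℤ))) (1:ℤ)).coeff (0,0)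
      = if q = (p.1+1, p.2+1) then (1:ℤ) else 0 := by
    intro q _
    rw [AddMonoidAlgebra.coeff_single, Finsupp.single_apply]
    refine if_congr ?_ rfl rfl
    rw [Prod.ext_iff, Prod.ext_iff]
    simp only [Prod.fst_add, Prod.snd_add]
    constructor <;> intro ⟨h1, h2⟩ <;> constructor <;> omega
  rw [Finset.sum_congr rfl this, Finset.sum_ite_eq' l ((p.1+1, p.2+1)) (fun _ => (1:ℤ))]

/-- The coefficient of `t₁⁰t₂⁰` in `t₁⁻¹t₂⁻¹ · Q_λ · Q̄_λ` is
`|λ| − |A₁| − |A₂| + 1` for a nonempty Young diagram `λ`. -/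
theorem fixed_part_t1inv_t2inv_Q_Qbar (l : Finset (ℕ × ℕ)) (h : YoungDiag l)
    (hne : l.Nonempty) :
    (AddMonoidAlgebra.single ((-1 : ℤ), (-1 : ℤ)) (1 : ℤ) * Qlam l * Qbar l).coeff (0, 0) =
      (l.card : ℤ) - ((l.image Prod.fst).card : ℤ) - ((l.image Prod.snd).card : ℤ) + 1 := by
  rw [coeff_eq_card l]
  exact card_filter_succ l h hne
end

section
/- For a nonempty finite Young diagram λ ⊂ ℤ≥0², the coefficient of t₁⁰t₂⁰ in the Laurent polynomial (1 − t₁⁻¹)(1 − t₂⁻¹) · Q_λ · Q̄_λ equals 1. -/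
lemma QQbar_apply (l : Finset (ℕ × ℕ)) (x : ℤ × ℤ) :
    (Qlam l * Qbar l).coeff x =
      ∑ p ∈ l, ∑ q ∈ l,
        (if ((p.1 : ℤ) - q.1, (p.2 : ℤ) - q.2) = x then (1 : ℤ) else 0) := by
  rw [Qlam, Qbar, Finset.sum_mul_sum]
  rw [AddMonoidAlgebra.coeff_sum, Finsupp.finset_sum_apply]
  refine Finset.sum_congr rfl fun p hp => ?_
  rw [AddMonoidAlgebra.coeff_sum, Finsupp.finset_sum_apply]
  refine Finset.sum_congr rfl fun q hq => ?_
  rw [AddMonoidAlgebra.single_mul_single]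
  rw [AddMonoidAlgebra.coeff_single, Finsupp.single_apply]
  simp [sub_eq_add_neg, Prod.mk_add_mk]

lemma youngInnerSum (l : Finset (ℕ × ℕ)) (h : YoungDiag l) {p : ℕ × ℕ} (hp : p ∈ l)
    (a b : ℕ) :
    (∑ q ∈ l, (if ((p.1 : ℤ) - q.1, (p.2 : ℤ) - q.2) = ((a : ℤ), (b : ℤ)) then (1 : ℤ) else 0))
      = if a ≤ p.1 ∧ b ≤ p.2 then 1 else 0 := by
  by_cases hab : a ≤ p.1 ∧ b ≤ p.2
  · rw [if_pos hab]
    have : ∀ q ∈ l,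
        (if ((p.1 : ℤ) - q.1, (p.2 : ℤ) - q.2) = ((a : ℤ), (b : ℤ)) then (1 : ℤ) else 0)
          = if q = (p.1 - a, p.2 - b) then 1 else 0 := by
      intro q _
      congr 1
      simp only [Prod.ext_iff, eq_iff_iff]
      constructor
      · rintro ⟨h1, h2⟩; omega
      · rintro ⟨h1, h2⟩; constructor <;> [skip; skip] <;> omega
    rw [Finset.sum_congr rfl this, Finset.sum_ite_eq' l]
    rw [if_pos (h p hp _ (by omega) (by omega))]
  · rw [if_neg hab]
    refine Finset.sum_eq_zero fun q _ => ?_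
    rw [if_neg]
    simp only [Prod.ext_iff]
    rintro ⟨h1, h2⟩
    omega

/-- The coefficient of `t₁⁰t₂⁰` in `(1 − t₁⁻¹)(1 − t₂⁻¹) · Q_λ · Q̄_λ` equals `1`
for a nonempty Young diagram `λ`. -/
theorem fixed_part_one_sub_invs_Q_Qbar (l : Finset (ℕ × ℕ)) (h : YoungDiag l)
    (hne : l.Nonempty) :
    ((1 - AddMonoidAlgebra.single ((-1 : ℤ), (0 : ℤ)) (1 : ℤ)) *
      (1 - AddMonoidAlgebra.single ((0 : ℤ), (-1 : ℤ)) (1 : ℤ)) *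
        Qlam l * Qbar l).coeff (0, 0) = 1 := by
  set u : AddMonoidAlgebra ℤ (ℤ × ℤ) := AddMonoidAlgebra.single ((-1 : ℤ), (0 : ℤ)) 1 with hu
  set v : AddMonoidAlgebra ℤ (ℤ × ℤ) := AddMonoidAlgebra.single ((0 : ℤ), (-1 : ℤ)) 1 with hv
  set P : AddMonoidAlgebra ℤ (ℤ × ℤ) := Qlam l * Qbar l with hP
  have huv : u * v = AddMonoidAlgebra.single ((-1 : ℤ), (-1 : ℤ)) 1 := by
    rw [hu, hv, AddMonoidAlgebra.single_mul_single]; norm_num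
  have expand : (1 - u) * (1 - v) * Qlam l * Qbar l
      = P - u * P - v * P + (u * v) * P := by
    rw [hP]; ring
  rw [expand, huv]
  rw [AddMonoidAlgebra.coeff_add, AddMonoidAlgebra.coeff_sub, AddMonoidAlgebra.coeff_sub,
    Finsupp.add_apply, Finsupp.sub_apply, Finsupp.sub_apply]
  rw [AddMonoidAlgebra.coeff_single_mul_apply, AddMonoidAlgebra.coeff_single_mul_apply,
    AddMonoidAlgebra.coeff_single_mul_apply]
  have e1 : (-((-1 : ℤ), (0 : ℤ)) + (0, 0)) = ((1 : ℤ), (0 : ℤ)) := by norm_num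
  have e2 : (-((0 : ℤ), (-1 : ℤ)) + (0, 0)) = ((0 : ℤ), (1 : ℤ)) := by norm_num
  have e3 : (-((-1 : ℤ), (-1 : ℤ)) + (0, 0)) = ((1 : ℤ), (1 : ℤ)) := by norm_num
  rw [e1, e2, e3, one_mul, one_mul, one_mul]
  have key : ∀ (a b : ℕ), P.coeff ((a : ℤ), (b : ℤ))
      = ∑ p ∈ l, (if a ≤ p.1 ∧ b ≤ p.2 then (1 : ℤ) else 0) := by
    intro a b
    rw [hP, QQbar_apply]
    exact Finset.sum_congr rfl fun p hp => youngInnerSum l h hp a b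
  have k00 := key 0 0
  have k10 := key 1 0
  have k01 := key 0 1
  have k11 := key 1 1
  push_cast at k00 k10 k01 k11
  rw [k00, k10, k01, k11, ← Finset.sum_sub_distrib, ← Finset.sum_sub_distrib,
    ← Finset.sum_add_distrib]
  have : ∀ p ∈ l,
      ((if 0 ≤ p.1 ∧ 0 ≤ p.2 then (1:ℤ) else 0) - (if 1 ≤ p.1 ∧ 0 ≤ p.2 then 1 else 0)
        - (if 0 ≤ p.1 ∧ 1 ≤ p.2 then 1 else 0) + (if 1 ≤ p.1 ∧ 1 ≤ p.2 then 1 else 0))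
      = if p = (0, 0) then 1 else 0 := by
    intro p _
    rcases p with ⟨x, y⟩
    simp only [Prod.mk.injEq]
    split_ifs <;> omega
  rw [Finset.sum_congr rfl this, Finset.sum_ite_eq' l]
  rw [if_pos]
  obtain ⟨p, hp⟩ := hne
  exact h p hp (0, 0) (Nat.zero_le _) (Nat.zero_le _)
end

section
/- Let d₁, d₂ ≥ 0 be integers and let λ be a nonempty finite Young diagram in ℤ≥0² contained in the (d₁,d₂)-rays (i.e., (k₁,k₂) ∈ λ implies k₁ < d₂ or k₂ < d₁). Then the coefficient of t₁⁰t₂⁰ in the Laurent polynomial G_λ := (1 − t₁^{−d₂}t₂^{−d₁})Q_λ + t₁⁻¹t₂⁻¹ Q̄_λ − (1 − t₁⁻¹)(1 − t₂⁻¹)Q_λ Q̄_λ equals 0. -/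
/-- Count of pairs `(p,q)` in `l²` with `p - q = v` (as an integer). -/
noncomputable def Nv (l : Finset (ℕ × ℕ)) (v : ℤ × ℤ) : ℤ :=
  ∑ p ∈ l, ∑ q ∈ l, if (((p.1 : ℤ) - q.1, (p.2 : ℤ) - q.2) : ℤ × ℤ) = v then 1 else 0

lemma sum_mem_ind (l : Finset (ℕ × ℕ)) (c : ℤ × ℤ) :
    (∑ q ∈ l, if (((q.1 : ℤ), (q.2 : ℤ)) : ℤ × ℤ) = c then (1 : ℤ) else 0) =
      if 0 ≤ c.1 ∧ 0 ≤ c.2 ∧ (c.1.toNat, c.2.toNat) ∈ l then 1 else 0 := by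
  by_cases hc : 0 ≤ c.1 ∧ 0 ≤ c.2
  · obtain ⟨h1, h2⟩ := hc
    have hcond : ∀ q : ℕ × ℕ, ((((q.1 : ℤ), (q.2 : ℤ)) : ℤ × ℤ) = c) ↔
        q = (c.1.toNat, c.2.toNat) := by
      intro q
      simp only [Prod.ext_iff]
      omega
    simp only [hcond]
    rw [Finset.sum_ite_eq' l (c.1.toNat, c.2.toNat) (fun _ => (1 : ℤ))]
    simp [h1, h2]
  · have hcond : ∀ q ∈ l, (if (((q.1 : ℤ), (q.2 : ℤ)) : ℤ × ℤ) = c then (1 : ℤ) else 0) = 0 := by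
      intro q _
      rw [if_neg]
      simp only [Prod.ext_iff]
      omega
    rw [Finset.sum_congr rfl hcond]
    simp only [Finset.sum_const_zero]
    rw [if_neg]
    tauto

lemma Nv_eq (l : Finset (ℕ × ℕ)) (v : ℤ × ℤ) :
    Nv l v = ∑ p ∈ l,
      (if 0 ≤ (p.1 : ℤ) - v.1 ∧ 0 ≤ (p.2 : ℤ) - v.2 ∧
          (((p.1 : ℤ) - v.1).toNat, ((p.2 : ℤ) - v.2).toNat) ∈ l then (1 : ℤ) else 0) := by
  unfold Nv
  refine Finset.sum_congr rfl fun p _ => ?_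
  rw [← sum_mem_ind l ((p.1 : ℤ) - v.1, (p.2 : ℤ) - v.2)]
  refine Finset.sum_congr rfl fun q _ => ?_
  refine if_congr ?_ rfl rfl
  simp only [Prod.ext_iff]
  omega

lemma zero_mem (l : Finset (ℕ × ℕ)) (h : YoungDiag l) (hne : l.Nonempty) : (0, 0) ∈ l := by
  obtain ⟨p, hp⟩ := hne
  exact h p hp (0, 0) (Nat.zero_le _) (Nat.zero_le _)

lemma count_key (l : Finset (ℕ × ℕ)) (h : YoungDiag l) (hne : l.Nonempty) :
    Nv l (0, 0) + Nv l (1, 1) - Nv l (1, 0) - Nv l (0, 1) = 1 := by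
  rw [Nv_eq, Nv_eq, Nv_eq, Nv_eq, ← Finset.sum_add_distrib, ← Finset.sum_sub_distrib,
    ← Finset.sum_sub_distrib]
  have key : ∀ p ∈ l, ((if 0 ≤ (p.1 : ℤ) - 0 ∧ 0 ≤ (p.2 : ℤ) - 0 ∧
          (((p.1 : ℤ) - 0).toNat, ((p.2 : ℤ) - 0).toNat) ∈ l then (1 : ℤ) else 0) +
        (if 0 ≤ (p.1 : ℤ) - 1 ∧ 0 ≤ (p.2 : ℤ) - 1 ∧
          (((p.1 : ℤ) - 1).toNat, ((p.2 : ℤ) - 1).toNat) ∈ l then (1 : ℤ) else 0) -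
        (if 0 ≤ (p.1 : ℤ) - 1 ∧ 0 ≤ (p.2 : ℤ) - 0 ∧
          (((p.1 : ℤ) - 1).toNat, ((p.2 : ℤ) - 0).toNat) ∈ l then (1 : ℤ) else 0) -
        (if 0 ≤ (p.1 : ℤ) - 0 ∧ 0 ≤ (p.2 : ℤ) - 1 ∧
          (((p.1 : ℤ) - 0).toNat, ((p.2 : ℤ) - 1).toNat) ∈ l then (1 : ℤ) else 0)) =
        if p = ((0 : ℕ), (0 : ℕ)) then 1 else 0 := by
    intro p hp
    obtain ⟨a, b⟩ := p
    have e0a : ((a : ℤ) - 0).toNat = a := by omega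
    have e0b : ((b : ℤ) - 0).toNat = b := by omega
    have e1a : ((a : ℤ) - 1).toNat = a - 1 := by omega
    have e1b : ((b : ℤ) - 1).toNat = b - 1 := by omega
    simp only [e0a, e0b, e1a, e1b]
    have m1 : (a, b) ∈ l := hp
    have m2 : (a - 1, b) ∈ l := h _ hp _ (Nat.sub_le _ _) le_rfl
    have m3 : (a, b - 1) ∈ l := h _ hp _ le_rfl (Nat.sub_le _ _)
    have m4 : (a - 1, b - 1) ∈ l := h _ hp _ (Nat.sub_le _ _) (Nat.sub_le _ _)
    by_cases ha : 1 ≤ a <;> by_cases hb : 1 ≤ b <;>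
      simp_all <;> omega
  rw [Finset.sum_congr rfl key, Finset.sum_ite_eq' l ((0 : ℕ), (0 : ℕ)) (fun _ => (1 : ℤ)),
    if_pos (zero_mem l h hne)]

lemma QQ_expand (l : Finset (ℕ × ℕ)) :
    Qlam l * Qbar l = ∑ p ∈ l, ∑ q ∈ l,
      AddMonoidAlgebra.single (((p.1 : ℤ) - q.1, (p.2 : ℤ) - q.2) : ℤ × ℤ) (1 : ℤ) := by
  unfold Qlam Qbar
  rw [Finset.sum_mul_sum]
  refine Finset.sum_congr rfl fun p _ => Finset.sum_congr rfl fun q _ => ?_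
  rw [AddMonoidAlgebra.single_mul_single, one_mul]
  congr 1

lemma single_mul_QQ_apply (l : Finset (ℕ × ℕ)) (w : ℤ × ℤ) :
    (AddMonoidAlgebra.single w (1 : ℤ) * (Qlam l * Qbar l)).coeff (0, 0) = Nv l (-w) := by
  rw [QQ_expand, Finset.mul_sum]
  simp only [Finset.mul_sum, AddMonoidAlgebra.single_mul_single, one_mul]
  rw [AddMonoidAlgebra.coeff_sum, Finsupp.finset_sum_apply]
  unfold Nv
  refine Finset.sum_congr rfl fun p _ => ?_
  rw [AddMonoidAlgebra.coeff_sum, Finsupp.finset_sum_apply]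
  refine Finset.sum_congr rfl fun q _ => ?_
  rw [AddMonoidAlgebra.coeff_single, Finsupp.single_apply]
  refine if_congr ?_ rfl rfl
  obtain ⟨w1, w2⟩ := w
  simp only [Prod.ext_iff, Prod.mk_add_mk, Prod.fst, Prod.snd, Prod.neg_mk]
  constructor <;> intro hh <;> constructor <;> omega

lemma QQ_apply (l : Finset (ℕ × ℕ)) :
    (Qlam l * Qbar l).coeff (0, 0) = Nv l (0, 0) := by
  have := single_mul_QQ_apply l 0
  rw [← AddMonoidAlgebra.one_def, one_mul] at this
  simpa [Prod.mk_zero_zero] using this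

lemma single_mul_Qlam_apply (l : Finset (ℕ × ℕ)) (w : ℤ × ℤ) :
    (AddMonoidAlgebra.single w (1 : ℤ) * Qlam l).coeff (0, 0) =
      if 0 ≤ -w.1 ∧ 0 ≤ -w.2 ∧ ((-w.1).toNat, (-w.2).toNat) ∈ l then 1 else 0 := by
  unfold Qlam
  rw [Finset.mul_sum]
  simp only [AddMonoidAlgebra.single_mul_single, one_mul]
  rw [AddMonoidAlgebra.coeff_sum, Finsupp.finset_sum_apply]
  rw [← sum_mem_ind l (-w.1, -w.2)]
  refine Finset.sum_congr rfl fun p _ => ?_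
  rw [AddMonoidAlgebra.coeff_single, Finsupp.single_apply]
  refine if_congr ?_ rfl rfl
  obtain ⟨w1, w2⟩ := w
  simp only [Prod.ext_iff, Prod.mk_add_mk, Prod.fst, Prod.snd]
  omega

lemma Qlam_apply (l : Finset (ℕ × ℕ)) :
    (Qlam l).coeff (0, 0) = if ((0 : ℕ), (0 : ℕ)) ∈ l then 1 else 0 := by
  have := single_mul_Qlam_apply l 0
  rw [← AddMonoidAlgebra.one_def, one_mul] at this
  simpa using this

lemma single_mul_Qbar_apply (l : Finset (ℕ × ℕ)) :
    (AddMonoidAlgebra.single ((-1 : ℤ), (-1 : ℤ)) (1 : ℤ) * Qbar l).coeff (0, 0) = 0 := by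
  unfold Qbar
  rw [Finset.mul_sum]
  simp only [AddMonoidAlgebra.single_mul_single, one_mul]
  rw [AddMonoidAlgebra.coeff_sum, Finsupp.finset_sum_apply]
  refine Finset.sum_eq_zero fun p _ => ?_
  rw [AddMonoidAlgebra.coeff_single, Finsupp.single_apply, if_neg]
  simp only [Prod.ext_iff, Prod.mk_add_mk, Prod.fst, Prod.snd]
  omega

/-- The fixed part of
`G_λ = (1 − t₁^{−d₂}t₂^{−d₁})Q_λ + t₁⁻¹t₂⁻¹ Q̄_λ − (1 − t₁⁻¹)(1 − t₂⁻¹)Q_λ Q̄_λ`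
vanishes for a nonempty Young diagram `λ` contained in the `(d₁,d₂)`-rays. -/
theorem fixed_part_G_vanishes (d₁ d₂ : ℕ) (l : Finset (ℕ × ℕ)) (h : YoungDiag l)
    (hne : l.Nonempty) (hray : ∀ p ∈ l, p.1 < d₂ ∨ p.2 < d₁) :
    ((1 - AddMonoidAlgebra.single (-(d₂ : ℤ), -(d₁ : ℤ)) (1 : ℤ)) * Qlam l +
      AddMonoidAlgebra.single ((-1 : ℤ), (-1 : ℤ)) (1 : ℤ) * Qbar l -
      (1 - AddMonoidAlgebra.single ((-1 : ℤ), (0 : ℤ)) (1 : ℤ)) *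
        (1 - AddMonoidAlgebra.single ((0 : ℤ), (-1 : ℤ)) (1 : ℤ)) *
          Qlam l * Qbar l).coeff (0, 0) = 0 := by
  have hs : AddMonoidAlgebra.single ((-1 : ℤ), (0 : ℤ)) (1 : ℤ) *
      AddMonoidAlgebra.single ((0 : ℤ), (-1 : ℤ)) (1 : ℤ) =
      AddMonoidAlgebra.single ((-1 : ℤ), (-1 : ℤ)) (1 : ℤ) := by
    rw [AddMonoidAlgebra.single_mul_single]
    norm_num
  have hring : (1 - AddMonoidAlgebra.single (-(d₂ : ℤ), -(d₁ : ℤ)) (1 : ℤ)) * Qlam l +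
      AddMonoidAlgebra.single ((-1 : ℤ), (-1 : ℤ)) (1 : ℤ) * Qbar l -
      (1 - AddMonoidAlgebra.single ((-1 : ℤ), (0 : ℤ)) (1 : ℤ)) *
        (1 - AddMonoidAlgebra.single ((0 : ℤ), (-1 : ℤ)) (1 : ℤ)) *
          Qlam l * Qbar l =
      (Qlam l + AddMonoidAlgebra.single ((-1 : ℤ), (-1 : ℤ)) (1 : ℤ) * Qbar l +
        AddMonoidAlgebra.single ((-1 : ℤ), (0 : ℤ)) (1 : ℤ) * (Qlam l * Qbar l) +
        AddMonoidAlgebra.single ((0 : ℤ), (-1 : ℤ)) (1 : ℤ) * (Qlam l * Qbar l)) -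
      (AddMonoidAlgebra.single (-(d₂ : ℤ), -(d₁ : ℤ)) (1 : ℤ) * Qlam l +
        Qlam l * Qbar l +
        AddMonoidAlgebra.single ((-1 : ℤ), (-1 : ℤ)) (1 : ℤ) * (Qlam l * Qbar l)) := by
    rw [← hs]; ring
  rw [hring, AddMonoidAlgebra.coeff_sub, AddMonoidAlgebra.coeff_add, AddMonoidAlgebra.coeff_add,
    AddMonoidAlgebra.coeff_add, AddMonoidAlgebra.coeff_add, AddMonoidAlgebra.coeff_add, Finsupp.sub_apply, Finsupp.add_apply, Finsupp.add_apply, Finsupp.add_apply,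
    Finsupp.add_apply, Finsupp.add_apply]
  rw [Qlam_apply, single_mul_Qbar_apply, single_mul_QQ_apply, single_mul_QQ_apply,
    single_mul_QQ_apply, single_mul_Qlam_apply, QQ_apply]
  have h0 : ((0 : ℕ), (0 : ℕ)) ∈ l := zero_mem l h hne
  rw [if_pos h0]
  have hd : ¬ (0 ≤ -(-(d₂ : ℤ)) ∧ 0 ≤ -(-(d₁ : ℤ)) ∧
      ((-(-(d₂ : ℤ))).toNat, (-(-(d₁ : ℤ))).toNat) ∈ l) := by
    rintro ⟨-, -, hm⟩
    simp only [neg_neg, Int.toNat_natCast] at hm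
    rcases hray _ hm with hc | hc <;> simp at hc
  rw [if_neg hd]
  have hcount := count_key l h hne
  have e1 : (-((-1 : ℤ), (0 : ℤ)) : ℤ × ℤ) = ((1 : ℤ), (0 : ℤ)) := by norm_num
  have e2 : (-((0 : ℤ), (-1 : ℤ)) : ℤ × ℤ) = ((0 : ℤ), (1 : ℤ)) := by norm_num
  have e3 : (-((-1 : ℤ), (-1 : ℤ)) : ℤ × ℤ) = ((1 : ℤ), (1 : ℤ)) := by norm_num
  rw [e1, e2, e3]
  omega
end

section
/- (Kronecker's criterion, one direction) Let (c_n)_{n≥0} be a sequence in a field K such that the power series ∑ c_n z^n is the expansion of a rational function p(z)/q(z) with deg p < N and deg q ≤ N for some N. Then for all m ≥ N, the (m+1)×(m+1) Hankel matrix H_m with entries (H_m)_{ij} = c_{i+j} (0 ≤ i,j ≤ m) has determinant zero. -/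
/-- Kronecker's criterion (one direction): if `∑ c_n z^n` is the expansion of a
rational function `p(z)/q(z)` with `q(0) ≠ 0`, `deg p < N` and `deg q ≤ N`, then
every Hankel determinant `det (c_{i+j})_{0≤i,j≤m}` with `m ≥ N` vanishes. -/
theorem kronecker_hankel {K : Type*} [Field K] (c : ℕ → K) (p q : Polynomial K) (N : ℕ)
    (hq0 : q.eval 0 ≠ 0) (hp : p.degree < N) (hq : q.degree ≤ N)
    (h : (q : PowerSeries K) * PowerSeries.mk c = (p : PowerSeries K)) :
    ∀ m : ℕ, N ≤ m →
      Matrix.det (Matrix.of fun i j : Fin (m + 1) => c ((i : ℕ) + (j : ℕ))) = 0 := by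
  intro m hm
  -- the linear recurrence satisfied by `c`
  have hrel : ∀ n : ℕ, N ≤ n →
      ∑ k ∈ Finset.range (N + 1), q.coeff k * c (n - k) = 0 := by
    intro n hn
    have h1 := congrArg (PowerSeries.coeff n) h
    rw [PowerSeries.coeff_mul, Finset.Nat.sum_antidiagonal_eq_sum_range_succ_mk] at h1
    simp only [PowerSeries.coeff_mk, Polynomial.coeff_coe] at h1
    have hp0 : p.coeff n = 0 :=
      Polynomial.coeff_eq_zero_of_degree_lt
        (lt_of_lt_of_le hp (by exact_mod_cast Nat.cast_le.mpr hn))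
    rw [hp0] at h1
    rw [← h1]
    apply Finset.sum_subset
    · exact Finset.range_subset_range.mpr (by omega)
    · intro k hk hk'
      have hNk : N < k := by
        simp only [Finset.mem_range, not_lt] at hk'
        omega
      have : q.coeff k = 0 :=
        Polynomial.coeff_eq_zero_of_degree_lt
          (lt_of_le_of_lt hq (by exact_mod_cast Nat.cast_lt.mpr hNk))
      simp [this]
  rw [← Matrix.exists_mulVec_eq_zero_iff]
  refine ⟨fun j : Fin (m + 1) => if (j : ℕ) ≤ N then q.coeff (N - (j : ℕ)) else 0, ?_, ?_⟩
  · intro hv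
    have hvN := congrFun hv ⟨N, by omega⟩
    simp only [Pi.zero_apply, if_pos le_rfl, Nat.sub_self] at hvN
    exact hq0 (by rwa [Polynomial.coeff_zero_eq_eval_zero] at hvN)
  · funext i
    simp only [Matrix.mulVec, dotProduct, Matrix.of_apply, Pi.zero_apply]
    rw [Fin.sum_univ_eq_sum_range
      (fun j => c ((i : ℕ) + j) * (if j ≤ N then q.coeff (N - j) else 0))]
    have step1 : ∑ j ∈ Finset.range (m + 1),
        c ((i : ℕ) + j) * (if j ≤ N then q.coeff (N - j) else 0)
        = ∑ j ∈ Finset.range (N + 1), c ((i : ℕ) + j) * q.coeff (N - j) := by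
      have hsub : Finset.range (N + 1) ⊆ Finset.range (m + 1) :=
        Finset.range_subset_range.mpr (by omega)
      rw [← Finset.sum_subset hsub (fun j _ hj' => by
        rw [if_neg (by simp only [Finset.mem_range, not_lt] at hj'; omega), mul_zero])]
      apply Finset.sum_congr rfl
      intro j hj
      rw [if_pos (by simpa [Nat.lt_succ_iff] using hj)]
    rw [step1]
    have h2 := hrel ((i : ℕ) + N) (by omega)
    rw [← Finset.sum_range_reflect (fun k => q.coeff k * c ((i : ℕ) + N - k)) (N + 1)] at h2
    rw [← h2]
    apply Finset.sum_congr rfl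
    intro j hj
    have hjN : j ≤ N := by simpa [Nat.lt_succ_iff] using hj
    have e1 : N + 1 - 1 - j = N - j := by omega
    have e2 : (i : ℕ) + N - (N - j) = (i : ℕ) + j := by omega
    rw [e1, e2, mul_comm]
end

section
/- For the hook partition λ_{a,b} = {(0,0)} ∪ {(i,0) : 1 ≤ i ≤ b} ∪ {(0,j) : 1 ≤ j ≤ a} one has the Laurent polynomial identity G := (1 − t₁⁻¹t₂⁻¹)Q_λ + t₁⁻¹t₂⁻¹ Q̄_λ − (1 − t₁⁻¹)(1 − t₂⁻¹) Q_λ Q̄_λ = t₁^{−(b+1)} t₂^{a} + t₁^{b} t₂^{−(a+1)} − t₁⁻¹t₂⁻¹ + ∑_{i=1}^{b} t₁^{−i} + ∑_{j=1}^{a} t₂^{−j}. -/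
open AddMonoidAlgebra

/-- abbreviation for a Laurent monomial `t₁^k t₂^l` in `ℤ[t₁^{±1},t₂^{±1}] = ℤ[ℤ×ℤ]`. -/
noncomputable def mono (k l : ℤ) : AddMonoidAlgebra ℤ (ℤ × ℤ) :=
  AddMonoidAlgebra.single (k, l) 1


section Abstract
variable {R : Type*} [CommRing R]

lemma hook_abstract (x y X X' Y Y' S S' T T' : R)
    (h1 : (1 - x) * S = X - 1) (h2 : (1 - x) * S' = x - X')
    (h3 : (1 - y) * T = Y - 1) (h4 : (1 - y) * T' = y - Y')
    (h9 : X * S' = 1 + S - X) (h10 : Y' * T = T') :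
    (1 - x*y) * (1 + S + T) + x*y * (1 + S' + T') -
      (1 - x) * (1 - y) * ((1 + S + T) * (1 + S' + T')) =
    X' * Y + X * Y' - x*y + S' + T' := by
  have h5 : x * S = 1 + S - X := by linear_combination -h1
  have h6 : y * T = 1 + T - Y := by linear_combination -h3
  have h7 : x * S' = S' - x + X' := by linear_combination -h2
  have h8 : y * T' = T' - y + Y' := by linear_combination -h4
  linear_combination (-y) * h5 + (-x) * h6 + h7 + x * h8
    - ((1 - y) * (1 + S' + T')) * h1 - ((1 - x) * T + X - x) * h4
    - (x - X') * h3 - ((1 - y) * T) * h2 + (1 - x) * h10 - (1 - y) * h9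

variable (e : ℤ → R) (he0 : e 0 = 1) (hem : ∀ k l, e (k + l) = e k * e l)
include he0 hem

lemma tele1 (b : ℕ) :
    (1 - e (-1)) * ∑ i ∈ Finset.Icc 1 b, e (i : ℤ) = e (b : ℤ) - 1 := by
  induction b with
  | zero => simp [he0]
  | succ n ih =>
      rw [Finset.sum_Icc_succ_top (Nat.le_add_left 1 n)]
      push_cast
      have h : e (-1) * e ((n : ℤ) + 1) = e (n : ℤ) := by
        rw [← hem]; congr 1; ring
      linear_combination ih - h

lemma tele2 (b : ℕ) :
    (1 - e (-1)) * ∑ i ∈ Finset.Icc 1 b, e (-(i : ℤ)) = e (-1) - e (-(b : ℤ) - 1) := by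
  induction b with
  | zero => simp
  | succ n ih =>
      rw [Finset.sum_Icc_succ_top (Nat.le_add_left 1 n)]
      push_cast
      rw [show -((n : ℤ) + 1) = -(n : ℤ) - 1 by ring,
          show -(n : ℤ) - 1 - 1 = -(n : ℤ) - 2 by ring]
      have h : e (-1) * e (-(n : ℤ) - 1) = e (-(n : ℤ) - 2) := by
        rw [← hem]; congr 1; ring
      linear_combination ih - h

lemma teleShift (b : ℕ) :
    e (-1) * ∑ i ∈ Finset.Icc 1 b, e (-(i : ℤ)) =
      (∑ i ∈ Finset.Icc 1 b, e (-(i : ℤ))) - e (-1) + e (-(b : ℤ) - 1) := by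
  induction b with
  | zero => simp
  | succ n ih =>
      rw [Finset.sum_Icc_succ_top (Nat.le_add_left 1 n)]
      push_cast
      rw [show -((n : ℤ) + 1) = -(n : ℤ) - 1 by ring,
          show -(n : ℤ) - 1 - 1 = -(n : ℤ) - 2 by ring]
      have h : e (-1) * e (-(n : ℤ) - 1) = e (-(n : ℤ) - 2) := by
        rw [← hem]; congr 1; ring
      linear_combination ih + h

lemma tele5 (b : ℕ) :
    e (-(b : ℤ) - 1) * ∑ i ∈ Finset.Icc 1 b, e (i : ℤ) =
      ∑ i ∈ Finset.Icc 1 b, e (-(i : ℤ)) := by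
  induction b with
  | zero => simp
  | succ n ih =>
      rw [Finset.sum_Icc_succ_top (Nat.le_add_left 1 n),
          Finset.sum_Icc_succ_top (Nat.le_add_left 1 n)]
      push_cast
      have hm : e (-(n : ℤ) - 2) = e (-1) * e (-(n : ℤ) - 1) := by
        rw [← hem]; congr 1; ring
      have hc : e (-(n : ℤ) - 1) * e ((n : ℤ) + 1) = 1 := by
        rw [← hem]
        have : -(n : ℤ) - 1 + ((n : ℤ) + 1) = 0 := by ring
        rw [this, he0]
      have hsh := teleShift e he0 hem n
      have : e (-(n : ℤ) - 1 - 1) = e (-(n : ℤ) - 2) := by congr 1; ring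
      rw [show -((n : ℤ) + 1) - 1 = -(n : ℤ) - 2 by ring,
          show -((n : ℤ) + 1) = -(n : ℤ) - 1 by ring]
      linear_combination ((∑ i ∈ Finset.Icc 1 n, e (i : ℤ)) + e ((n : ℤ) + 1)) * hm
        + e (-1) * ih + hsh + e (-1) * hc

lemma tele4 (b : ℕ) :
    e (b : ℤ) * ∑ i ∈ Finset.Icc 1 b, e (-(i : ℤ)) =
      1 + (∑ i ∈ Finset.Icc 1 b, e (i : ℤ)) - e (b : ℤ) := by
  have h5 : e (-1) * ∑ i ∈ Finset.Icc 1 b, e (i : ℤ) =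
      1 + (∑ i ∈ Finset.Icc 1 b, e (i : ℤ)) - e (b : ℤ) := by
    linear_combination -(tele1 e he0 hem b)
  have hx : e (b : ℤ) * e (-(b : ℤ) - 1) = e (-1) := by
    rw [← hem]; congr 1; ring
  linear_combination (-(e (b : ℤ))) * tele5 e he0 hem b
    + (∑ i ∈ Finset.Icc 1 b, e (i : ℤ)) * hx + h5

end Abstract

lemma mono_mul (k l k' l' : ℤ) : mono k l * mono k' l' = mono (k + k') (l + l') := by
  simp [mono, AddMonoidAlgebra.single_mul_single]

lemma mono_zero : mono 0 0 = 1 := rfl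

/-- For the hook partition `λ_{a,b}` with
`Q_λ = 1 + ∑_{i=1}^{b} t₁^i + ∑_{j=1}^{a} t₂^j` and `Q̄_λ = Q_λ(t₁⁻¹,t₂⁻¹)`:
`(1 − t₁⁻¹t₂⁻¹)Q_λ + t₁⁻¹t₂⁻¹ Q̄_λ − (1 − t₁⁻¹)(1 − t₂⁻¹) Q_λ Q̄_λ
  = t₁^{−(b+1)} t₂^{a} + t₁^{b} t₂^{−(a+1)} − t₁⁻¹t₂⁻¹
    + ∑_{i=1}^{b} t₁^{−i} + ∑_{j=1}^{a} t₂^{−j}`. -/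
theorem hook_G_identity (a b : ℕ) :
    (1 - mono (-1) (-1)) *
        (1 + (∑ i ∈ Finset.Icc 1 b, mono (i : ℤ) 0) + ∑ j ∈ Finset.Icc 1 a, mono 0 (j : ℤ)) +
      mono (-1) (-1) *
        (1 + (∑ i ∈ Finset.Icc 1 b, mono (-(i : ℤ)) 0) + ∑ j ∈ Finset.Icc 1 a, mono 0 (-(j : ℤ))) -
      (1 - mono (-1) 0) * (1 - mono 0 (-1)) *
        (1 + (∑ i ∈ Finset.Icc 1 b, mono (i : ℤ) 0) + ∑ j ∈ Finset.Icc 1 a, mono 0 (j : ℤ)) *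
        (1 + (∑ i ∈ Finset.Icc 1 b, mono (-(i : ℤ)) 0) + ∑ j ∈ Finset.Icc 1 a, mono 0 (-(j : ℤ))) =
    mono (-(b : ℤ) - 1) (a : ℤ) + mono (b : ℤ) (-(a : ℤ) - 1) - mono (-1) (-1) +
      (∑ i ∈ Finset.Icc 1 b, mono (-(i : ℤ)) 0) + ∑ j ∈ Finset.Icc 1 a, mono 0 (-(j : ℤ)) := by
  have he0₁ : (fun k : ℤ => mono k 0) 0 = 1 := rfl
  have hem₁ : ∀ k l : ℤ, (fun k : ℤ => mono k 0) (k + l) =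
      (fun k : ℤ => mono k 0) k * (fun k : ℤ => mono k 0) l := by
    intro k l; simp [mono_mul]
  have he0₂ : (fun k : ℤ => mono 0 k) 0 = 1 := rfl
  have hem₂ : ∀ k l : ℤ, (fun k : ℤ => mono 0 k) (k + l) =
      (fun k : ℤ => mono 0 k) k * (fun k : ℤ => mono 0 k) l := by
    intro k l; simp [mono_mul]
  have h1 : (1 - mono (-1) 0) * ∑ i ∈ Finset.Icc 1 b, mono (i : ℤ) 0 = mono (b : ℤ) 0 - 1 := by
    simpa using tele1 (fun k : ℤ => mono k 0) he0₁ hem₁ b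
  have h2 : (1 - mono (-1) 0) * ∑ i ∈ Finset.Icc 1 b, mono (-(i : ℤ)) 0 =
      mono (-1) 0 - mono (-(b : ℤ) - 1) 0 := by
    simpa using tele2 (fun k : ℤ => mono k 0) he0₁ hem₁ b
  have h3 : (1 - mono 0 (-1)) * ∑ j ∈ Finset.Icc 1 a, mono 0 (j : ℤ) = mono 0 (a : ℤ) - 1 := by
    simpa using tele1 (fun k : ℤ => mono 0 k) he0₂ hem₂ a
  have h4 : (1 - mono 0 (-1)) * ∑ j ∈ Finset.Icc 1 a, mono 0 (-(j : ℤ)) =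
      mono 0 (-1) - mono 0 (-(a : ℤ) - 1) := by
    simpa using tele2 (fun k : ℤ => mono 0 k) he0₂ hem₂ a
  have h9 : mono (b : ℤ) 0 * ∑ i ∈ Finset.Icc 1 b, mono (-(i : ℤ)) 0 =
      1 + (∑ i ∈ Finset.Icc 1 b, mono (i : ℤ) 0) - mono (b : ℤ) 0 := by
    simpa using tele4 (fun k : ℤ => mono k 0) he0₁ hem₁ b
  have h10 : mono 0 (-(a : ℤ) - 1) * ∑ j ∈ Finset.Icc 1 a, mono 0 (j : ℤ) =
      ∑ j ∈ Finset.Icc 1 a, mono 0 (-(j : ℤ)) := by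
    simpa using tele5 (fun k : ℤ => mono 0 k) he0₂ hem₂ a
  have key := hook_abstract (mono (-1) 0) (mono 0 (-1)) (mono (b : ℤ) 0)
    (mono (-(b : ℤ) - 1) 0) (mono 0 (a : ℤ)) (mono 0 (-(a : ℤ) - 1))
    (∑ i ∈ Finset.Icc 1 b, mono (i : ℤ) 0) (∑ i ∈ Finset.Icc 1 b, mono (-(i : ℤ)) 0)
    (∑ j ∈ Finset.Icc 1 a, mono 0 (j : ℤ)) (∑ j ∈ Finset.Icc 1 a, mono 0 (-(j : ℤ)))
    h1 h2 h3 h4 h9 h10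
  have hxy : mono (-1) 0 * mono 0 (-1) = mono (-1) (-1) := by rw [mono_mul]; norm_num
  have hXY : mono (-(b : ℤ) - 1) 0 * mono 0 (a : ℤ) = mono (-(b : ℤ) - 1) (a : ℤ) := by
    rw [mono_mul]; norm_num
  have hXY' : mono (b : ℤ) 0 * mono 0 (-(a : ℤ) - 1) = mono (b : ℤ) (-(a : ℤ) - 1) := by
    rw [mono_mul]; norm_num
  rw [← hxy, ← hXY, ← hXY']
  linear_combination key
end

section
/- In the ring of formal power series ℚ(s₁,s₂)[[q]], the identity ∑_{a,b≥0} q^{a+b+1} ∏_{i=1}^{b}((1−is₁)/(−is₁)) ∏_{j=1}^{a}((1−js₂)/(−js₂)) = q · (1−q)^{1/s₁ − 1} · (1−q)^{1/s₂ − 1} holds, where (1−q)^{α} denotes the binomial series. -/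
noncomputable def genBinom {K : Type*} [Field K] (x : K) (b : ℕ) : K :=
  (∏ j ∈ Finset.range b, (x - (j : K))) / (Nat.factorial b : K)

abbrev K2 : Type := FractionRing (MvPolynomial (Fin 2) ℚ)

noncomputable def sPar (i : Fin 2) : K2 :=
  algebraMap (MvPolynomial (Fin 2) ℚ) K2 (MvPolynomial.X i)

lemma sPar_ne_zero (i : Fin 2) : sPar i ≠ 0 := by
  simpa [sPar] using
    (map_ne_zero_iff _ (IsFractionRing.injective (MvPolynomial (Fin 2) ℚ) K2)).mpr
      (MvPolynomial.X_ne_zero (R := ℚ) i)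

lemma key {K : Type*} [Field K] [CharZero K] (s : K) (hs : s ≠ 0) (b : ℕ) :
    ∏ i ∈ Finset.Icc 1 b, (1 - (i : K) * s) / (-(i : K) * s)
      = (-1 : K) ^ b * genBinom (1 / s - 1) b := by
  induction b with
  | zero => simp [genBinom]
  | succ b ih =>
    rw [Finset.prod_Icc_succ_top (by omega), ih]
    unfold genBinom
    rw [Finset.prod_range_succ, Nat.factorial_succ]
    have hb1 : ((b : K) + 1) ≠ 0 := by exact_mod_cast (Nat.cast_ne_zero (R := K)).mpr (Nat.succ_ne_zero b)
    have hf : ((Nat.factorial b : K)) ≠ 0 := Nat.cast_ne_zero.mpr (Nat.factorial_ne_zero b)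
    have hb2 : (-1 + -(b : K)) ≠ 0 := by
      intro h
      apply hb1
      linear_combination -h
    push_cast
    field_simp
    ring

/-- In `ℚ(s₁,s₂)[[q]]`:
`∑_{a,b≥0} q^{a+b+1} ∏_{i=1}^{b}((1−is₁)/(−is₁)) ∏_{j=1}^{a}((1−js₂)/(−js₂))
  = q · (1−q)^{1/s₁−1} · (1−q)^{1/s₂−1}`,
with `(1−q)^α` the binomial series `∑_n (−1)^n C(α,n) q^n`. -/
theorem cauchy_product_identity :
    PowerSeries.mk (fun n : ℕ =>
        if n = 0 then (0 : K2) else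
          ∑ p ∈ Finset.HasAntidiagonal.antidiagonal (n - 1),
            (∏ i ∈ Finset.Icc 1 p.2, (1 - (i : K2) * sPar 0) / (-(i : K2) * sPar 0)) *
              ∏ j ∈ Finset.Icc 1 p.1, (1 - (j : K2) * sPar 1) / (-(j : K2) * sPar 1)) =
      PowerSeries.X *
        PowerSeries.mk (fun n : ℕ => (-1 : K2) ^ n * genBinom (1 / sPar 0 - 1) n) *
        PowerSeries.mk (fun n : ℕ => (-1 : K2) ^ n * genBinom (1 / sPar 1 - 1) n) := by
  rw [mul_assoc]
  ext n
  cases n with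
  | zero => simp
  | succ n =>
    rw [PowerSeries.coeff_succ_X_mul, PowerSeries.coeff_mul, PowerSeries.coeff_mk]
    simp only [Nat.succ_ne_zero, if_false, Nat.add_sub_cancel, PowerSeries.coeff_mk]
    conv_rhs => rw [← Finset.HasAntidiagonal.map_swap_antidiagonal (n := n)]
    rw [Finset.sum_map]
    refine Finset.sum_congr rfl fun p _ => ?_
    simp only [Function.Embedding.coeFn_mk, Prod.fst_swap, Prod.snd_swap]
    rw [key _ (sPar_ne_zero 0), key _ (sPar_ne_zero 1)]
end
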